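/- For n ≥ 3 and s = n, the ideal I(n,t) generated by the slice minors has exactly two minimal primes: the prime Ĩ(n,t) generated by all generalized minors, and the monomial prime generated by all variables x_a with a not n-equivalent to (1,…,1) or (r_1,…,r_n). -/

import Mathlib

open Finset

/-- The set of indices: `a i` (a value in `Fin (r i)`) represents the entry `a_i = (a i) + 1`
of an index in `[r 1] × ⋯ × [r n]`.  So `0` corresponds to the entry `1` and `r i - 1`
to the entry `r i`. -/
abbrev Idx (n : ℕ) (r : Fin n → ℕ) := ∀ i : Fin n, Fin (r i)

/-- `a` and `b` are `s`-equivalent: equal sums of the first `s` components and equal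
remaining components. -/
def sEquiv (n s : ℕ) (r : Fin n → ℕ) (a b : Idx n r) : Prop :=
  (∑ i ∈ Finset.univ.filter (fun i : Fin n => (i : ℕ) < s), (a i : ℕ)) =
    (∑ i ∈ Finset.univ.filter (fun i : Fin n => (i : ℕ) < s), (b i : ℕ)) ∧
  ∀ i : Fin n, s ≤ (i : ℕ) → a i = b i

/-- The switch of `a` and `b` with respect to a single component `i`. -/
def sw {n : ℕ} {r : Fin n → ℕ} (i : Fin n) (a b : Idx n r) : Idx n r :=
  fun j => if j = i then b j else a j

/-- The switch of `a` and `b` with respect to a set `L` of components. -/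
def swL {n : ℕ} {r : Fin n → ℕ} (L : Finset (Fin n)) (a b : Idx n r) : Idx n r :=
  fun j => if j ∈ L then b j else a j

/-- An `(s,t)`-switchable subset of the set of indices. -/
def Switchable (n s t : ℕ) (r : Fin n → ℕ) (S : Set (Idx n r)) : Prop :=
  (∀ a b, a ∈ S → b ∈ S → hammingDist a b = 2 →
    ∀ i : Fin n, (i : ℕ) < t → sw i a b ∈ S) ∧
  (∀ a b, a ∈ S → sEquiv n s r a b → b ∈ S)

/-- `c 0, c 1, …, c k` is a path in `S`: all members lie in `S` and consecutive members
have Hamming distance `1`. -/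
def IsPathIn {n : ℕ} {r : Fin n → ℕ} (S : Set (Idx n r)) (c : ℕ → Idx n r) (k : ℕ) : Prop :=
  (∀ j ≤ k, c j ∈ S) ∧ ∀ j < k, hammingDist (c j) (c (j + 1)) = 1

/-- `a` and `b` are connected in `S`. -/
def ConnectedIn {n : ℕ} {r : Fin n → ℕ} (S : Set (Idx n r)) (a b : Idx n r) : Prop :=
  ∃ k c, c 0 = a ∧ c k = b ∧ IsPathIn S c k

/-- The setoid of `s`-equivalence on the set of indices. -/
def sSetoid (n s : ℕ) (r : Fin n → ℕ) : Setoid (Idx n r) where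
  r := sEquiv n s r
  iseqv := ⟨fun _ => ⟨rfl, fun _ _ => rfl⟩,
    fun h => ⟨h.1.symm, fun i hi => (h.2 i hi).symm⟩,
    fun h g => ⟨h.1.trans g.1, fun i hi => (h.2 i hi).trans (g.2 i hi)⟩⟩

/-- The variables of the ring `R` are indexed by `s`-equivalence classes of indices,
i.e. `x a = x b` iff `a` and `b` are `s`-equivalent. -/
abbrev IQ (n s : ℕ) (r : Fin n → ℕ) := Quotient (sSetoid n s r)

/-- The variable `x_a` of the polynomial ring `R = k[x_a : a ∈ N]`. -/
noncomputable def xvar (k : Type) [CommRing k] {n : ℕ} (s : ℕ) {r : Fin n → ℕ}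
    (a : Idx n r) : MvPolynomial (IQ n s r) k :=
  MvPolynomial.X (Quotient.mk (sSetoid n s r) a)

/-- The generalized `2 × 2` minor `f_{i,a,b} = x_a x_b − x_{sw(i,a,b)} x_{sw(i,b,a)}`. -/
noncomputable def gminor (k : Type) [CommRing k] {n : ℕ} (s : ℕ) {r : Fin n → ℕ}
    (i : Fin n) (a b : Idx n r) : MvPolynomial (IQ n s r) k :=
  xvar k s a * xvar k s b - xvar k s (sw i a b) * xvar k s (sw i b a)

/-- The ideal `I(s,t)`, generated by the slice minors `f_{i,a,b}` with `d(a,b) = 2`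
and `i ∈ [t]`. -/
noncomputable def ISlice (k : Type) [CommRing k] {n : ℕ} (s t : ℕ) (r : Fin n → ℕ) :
    Ideal (MvPolynomial (IQ n s r) k) :=
  Ideal.span {f | ∃ i : Fin n, ∃ a b : Idx n r,
    (i : ℕ) < t ∧ hammingDist a b = 2 ∧ f = gminor k s i a b}

/-- The ideal `Ĩ(s,t)`, generated by all generalized minors `f_{i,a,b}` with `i ∈ [t]`. -/
noncomputable def ITilde (k : Type) [CommRing k] {n : ℕ} (s t : ℕ) (r : Fin n → ℕ) :
    Ideal (MvPolynomial (IQ n s r) k) :=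
  Ideal.span {f | ∃ i : Fin n, ∃ a b : Idx n r, (i : ℕ) < t ∧ f = gminor k s i a b}

/-- The ideal `Ĩ(s,t)_S`, generated by the generalized minors `f_{i,a,b}` with `i ∈ [t]`
and `a, b` connected in `S`. -/
noncomputable def ITildeS (k : Type) [CommRing k] {n : ℕ} (s t : ℕ) {r : Fin n → ℕ}
    (S : Set (Idx n r)) : Ideal (MvPolynomial (IQ n s r) k) :=
  Ideal.span {f | ∃ i : Fin n, ∃ a b : Idx n r,
    (i : ℕ) < t ∧ ConnectedIn S a b ∧ f = gminor k s i a b}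


/-!
For `s = n` the variable `x_a` only depends on the weight `|a| = ∑ aᵢ ∈ [0, m]`, so the ring is
`k[y₀, …, y_m]` and a generalized minor reads `y_p y_q - y_{p'} y_{q'}` with `p + q = p' + q'`.
Moving weight through the first coordinate produces enough of these minors to show that `Ĩ(n,t)`
is the ideal of `2 × 2` minors of the Hankel matrix `(y_{i+j})`: all monomials of equal degree and weight
agree modulo `Ĩ(n,t)`, hence `Ĩ(n,t)` is the kernel of `y_c ↦ S Tᶜ` and is prime. The ideal `P` of
the interior variables `y₁, …, y_{m-1}` is prime and contains `I(n,t)`, because the two indices of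
weight `0` and `m` are at distance `n ≥ 3`. Finally, if a prime `Q ⊇ I(n,t)` misses some
interior variable, the slice minors `y_{u+1}² - y_u y_{u+2}` make the images of all `y_u` in the
fraction field of `R / Q` nonzero, hence a geometric progression, so `Q ⊇ Ĩ(n,t)`.
-/

open MvPolynomial

/-- The `2 × 2` minors of the Hankel matrix `(z (i + j))` vanish. -/
def HankelOn {A : Type*} [Mul A] (m : ℕ) (z : ℕ → A) : Prop :=
  ∀ p q p' q', p ≤ m → q ≤ m → p' ≤ m → q' ≤ m → p + q = p' + q' → z p * z q = z p' * z q'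

namespace HankelOn

variable {A : Type*} [CommMonoid A] {m : ℕ} {z : ℕ → A}

theorem of_narrowing
    (h : ∀ p q, p + 2 ≤ q → q ≤ m →
      ∃ d, 0 < d ∧ d < q - p ∧ z p * z q = z (p + d) * z (q - d)) :
    HankelOn m z := by
  have ordered : ∀ w p q, p ≤ q → q ≤ m → q - p = w →
      z p * z q = z ((p + q) / 2) * z ((p + q + 1) / 2) := by
    intro w
    induction w using Nat.strong_induction_on with
    | _ w ih =>
    intro p q hpq hq hw
    by_cases hgap : p + 2 ≤ q
    · obtain ⟨d, hd0, hdw, hz⟩ := h p q hgap hq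
      have hsum : p + d + (q - d) = p + q := by omega
      rw [hz]
      rcases le_total (p + d) (q - d) with h' | h'
      · rw [ih _ (by omega) _ _ h' (by omega) rfl, hsum]
      · rw [mul_comm, ih _ (by omega) _ _ h' (by omega) rfl, add_comm, hsum]
    · rw [show (p + q) / 2 = p by omega, show (p + q + 1) / 2 = q by omega]
  have balanced : ∀ p q, p ≤ m → q ≤ m →
      z p * z q = z ((p + q) / 2) * z ((p + q + 1) / 2) := fun p q hp hq =>
    (le_total p q).elim (fun h => ordered _ p q h hq rfl)
      (fun h => by rw [mul_comm, add_comm p]; exact ordered _ q p h hp rfl)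
  intro p q p' q' hp hq hp' hq' hs
  rw [balanced p q hp hq, balanced p' q' hp' hq', hs]

theorem multiset_prod_map_eq (hz : HankelOn m z) {s t : Multiset ℕ}
    (hs : ∀ x ∈ s, x ≤ m) (ht : ∀ y ∈ t, y ≤ m) (hcard : Multiset.card s = Multiset.card t)
    (hsum : s.sum = t.sum) : (s.map z).prod = (t.map z).prod := by
  induction hd : Multiset.card s generalizing s t with
  | zero =>
    rw [Multiset.card_eq_zero.1 hd, Multiset.card_eq_zero.1 (hcard.symm.trans hd)]
  | succ d ih =>
    obtain ⟨x, hx, hxmax⟩ := Multiset.exists_max_image id (s := s)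
      (Multiset.card_pos.1 (by omega))
    obtain ⟨y, hy, hymax⟩ := Multiset.exists_max_image id (s := t)
      (Multiset.card_pos.1 (by omega))
    wlog hyx : y ≤ x generalizing s t x y
    · exact (this ht hs hcard.symm hsum.symm (hcard ▸ hd) y hy hymax x hx hxmax
        (not_le.1 hyx).le).symm
    obtain ⟨s₁, rfl⟩ := Multiset.exists_cons_of_mem hx
    obtain ⟨t₁, rfl⟩ := Multiset.exists_cons_of_mem hy
    simp only [Multiset.card_cons, Multiset.sum_cons, Multiset.map_cons,
      Multiset.prod_cons, Multiset.mem_cons, forall_eq_or_imp, id] at *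
    rcases hyx.eq_or_lt with rfl | hlt
    · rw [ih hs.2 ht.2 (by omega) (by omega) (by omega)]
    -- Trade `z x * z w` for `z y * z (x + w - y)`, so that the maximum `y` of `t` cancels.
    obtain ⟨w, hw, hwy⟩ : ∃ w ∈ s₁, w ≤ y := by
      by_contra! hlarge
      have h₁ := Multiset.card_nsmul_le_sum (s := s₁) (a := y + 1) hlarge
      have h₂ := Multiset.sum_le_card_nsmul (y ::ₘ t₁) y (by simpa using hymax)
      simp only [smul_eq_mul, Multiset.card_cons, Multiset.sum_cons] at h₁ h₂
      nlinarith
    obtain ⟨s₂, rfl⟩ := Multiset.exists_cons_of_mem hw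
    simp only [Multiset.card_cons, Multiset.sum_cons, Multiset.map_cons,
      Multiset.prod_cons, Multiset.mem_cons, forall_eq_or_imp] at *
    have hmove : z x * z w = z y * z (x + w - y) :=
      hz _ _ _ _ hs.1 hs.2.1 ht.1 (by omega) (by omega)
    rw [← mul_assoc, hmove, mul_assoc, ← Multiset.prod_cons, ← Multiset.map_cons,
      ih (s := (x + w - y) ::ₘ s₂) ?_ ht.2 (by rw [Multiset.card_cons]; omega)
        (by rw [Multiset.sum_cons]; omega) (by rw [Multiset.card_cons]; omega)]
    simp only [Multiset.mem_cons, forall_eq_or_imp]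
    exact ⟨by omega, hs.2.2⟩

end HankelOn

section ThreeTerm

variable {M : Type*} {m : ℕ} {z : ℕ → M}

theorem eq_zero_of_sq_eq_mul_of_eq_zero [MonoidWithZero M] [NoZeroDivisors M]
    (h : ∀ u, u + 2 ≤ m → z (u + 1) ^ 2 = z u * z (u + 2)) {u : ℕ} (hu : z u = 0) :
    ∀ j, u ≤ j → j < m → z j = 0 := by
  intro j huj hjm
  induction j, huj using Nat.le_induction with
  | base => exact hu
  | succ j _ ih =>
    exact (pow_eq_zero_iff two_ne_zero).1 (by rw [h j (by omega), ih (by omega), zero_mul])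

theorem ne_zero_of_sq_eq_mul [CommMonoidWithZero M] [NoZeroDivisors M]
    (h : ∀ u, u + 2 ≤ m → z (u + 1) ^ 2 = z u * z (u + 2)) {c : ℕ} (hc0 : 0 < c) (hcm : c < m)
    (hc : z c ≠ 0) (u : ℕ) (hu : u ≤ m) : z u ≠ 0 := by
  intro hzu
  rcases le_or_gt u c with huc | hcu
  · exact hc (eq_zero_of_sq_eq_mul_of_eq_zero h hzu c huc hcm)
  -- The reflected sequence `j ↦ z (m - j)` satisfies the same relations.
  · have hrev : ∀ j, j + 2 ≤ m → z (m - (j + 1)) ^ 2 = z (m - j) * z (m - (j + 2)) := by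
      intro j hj
      have h' := h (m - (j + 2)) (by omega)
      rwa [show m - (j + 2) + 1 = m - (j + 1) by omega, show m - (j + 2) + 2 = m - j by omega,
        mul_comm] at h'
    have := eq_zero_of_sq_eq_mul_of_eq_zero (z := fun j => z (m - j)) hrev
      (u := m - u) (by simpa [Nat.sub_sub_self hu] using hzu) (m - c) (by omega) (by omega)
    exact hc (by simpa [Nat.sub_sub_self hcm.le] using this)

theorem hankelOn_of_sq_eq_mul [Field M] (hz : ∀ u ≤ m, z u ≠ 0)
    (h : ∀ u, u + 2 ≤ m → z (u + 1) ^ 2 = z u * z (u + 2)) : HankelOn m z := by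
  have geom : ∀ u ≤ m, z u = z 0 * (z 1 / z 0) ^ u := by
    intro u
    induction u using Nat.strong_induction_on with
    | _ u ih =>
    intro hu
    match u, ih with
    | 0, _ => simp
    | 1, _ => field_simp [hz 0 (Nat.zero_le _)]
    | u + 2, ih =>
      refine mul_left_cancel₀ (hz u (by omega)) ?_
      rw [← h u hu, ih (u + 1) (by omega) (by omega), ih u (by omega) (by omega)]
      ring
  intro p q p' q' hp hq hp' hq' hs
  rw [geom p hp, geom q hq, geom p' hp', geom q' hq', mul_mul_mul_comm, ← pow_add,
    mul_mul_mul_comm, ← pow_add, hs]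

end ThreeTerm

theorem LinearMap.ker_le_of_basis {R M N ι κ : Type*} [CommRing R] [AddCommGroup M]
    [Module R M] [AddCommGroup N] [Module R N] (b : Module.Basis ι R M)
    (c : Module.Basis κ R N) (f : M →ₗ[R] N) (g : ι → κ) (hf : ∀ i, f (b i) = c (g i))
    (J : Submodule R M) (hJ : ∀ i j, g i = g j → b i - b j ∈ J) : LinearMap.ker f ≤ J := by
  classical
  -- `L` is a left inverse of `f` modulo `J`.
  let L : N →ₗ[R] M ⧸ J :=
    c.constr R fun l => if h : ∃ i, g i = l then J.mkQ (b h.choose) else 0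
  have hL : L ∘ₗ f = J.mkQ := b.ext fun i => by
    have h : ∃ j, g j = g i := ⟨i, rfl⟩
    simp only [LinearMap.comp_apply, hf, L, Module.Basis.constr_basis, dif_pos h,
      Submodule.mkQ_apply, Submodule.Quotient.eq]
    exact hJ _ _ h.choose_spec
  intro x hx
  have := LinearMap.congr_fun hL x
  rwa [LinearMap.comp_apply, LinearMap.mem_ker.1 hx, map_zero, eq_comm, Submodule.mkQ_apply,
    Submodule.Quotient.mk_eq_zero] at this

namespace MvPolynomial

variable {σ R : Type*}

theorem X_mem_span_X_image_iff [CommSemiring R] [Nontrivial R] {s : Set σ} {i : σ} :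
    (X i : MvPolynomial σ R) ∈ Ideal.span (X '' s) ↔ i ∈ s := by
  classical
  refine ⟨fun h => ?_, fun h => Ideal.subset_span ⟨i, h, rfl⟩⟩
  obtain ⟨j, hj, hij⟩ := mem_ideal_span_X_image.1 h (Finsupp.single i 1) (by simp [support_X])
  obtain ⟨rfl, -⟩ := Finsupp.single_apply_ne_zero.1 hij
  exact hj

theorem span_X_image_eq_ker [CommRing R] (s : Set σ) [DecidablePred (· ∈ s)] :
    Ideal.span (X '' s : Set (MvPolynomial σ R)) =
      RingHom.ker (aeval fun i => if i ∈ s then 0 else X i :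
        MvPolynomial σ R →ₐ[R] MvPolynomial σ R) := by
  set ψ : MvPolynomial σ R →ₐ[R] MvPolynomial σ R := aeval fun i => if i ∈ s then 0 else X i
  refine le_antisymm (Ideal.span_le.2 ?_) fun f hf => ?_
  · rintro _ ⟨i, hi, rfl⟩
    simp [ψ, hi]
  · have key : ∀ f, f - ψ f ∈ Ideal.span (X '' s) := by
      intro f
      induction f using MvPolynomial.induction_on with
      | C a => simp [ψ]
      | add p q hp hq => simpa [add_sub_add_comm] using Ideal.add_mem _ hp hq
      | mul_X p i hp =>
        by_cases hi : i ∈ s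
        · simpa [ψ, hi] using
            Ideal.mul_mem_left _ p (Ideal.subset_span (Set.mem_image_of_mem X hi))
        · simpa [ψ, hi, ← sub_mul] using Ideal.mul_mem_right (X i) _ hp
    simpa [RingHom.mem_ker.1 hf] using key f

theorem isPrime_span_X_image [CommRing R] [IsDomain R] (s : Set σ) :
    (Ideal.span (X '' s : Set (MvPolynomial σ R))).IsPrime := by
  classical
  rw [span_X_image_eq_ker (R := R) s]
  exact RingHom.ker_isPrime _

theorem monomial_one_eq_prod_map_X [CommSemiring R] (e : σ →₀ ℕ) :
    monomial e (1 : R) = (e.toMultiset.map X).prod := by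
  induction e using Finsupp.induction with
  | zero => simp
  | single_add i n e _ _ ih =>
    rw [Finsupp.toMultiset_add, Multiset.map_add, Multiset.prod_add, ← ih,
      Finsupp.toMultiset_single, Multiset.map_nsmul, Multiset.prod_nsmul, Multiset.map_singleton,
      Multiset.prod_singleton, X_pow_eq_monomial, monomial_mul, one_mul]

end MvPolynomial

theorem Ideal.minimalPrimes_eq_pair {R : Type*} [CommSemiring R] {I P₁ P₂ : Ideal R}
    (h₁ : P₁.IsPrime) (h₂ : P₂.IsPrime) (hI₁ : I ≤ P₁) (hI₂ : I ≤ P₂) (h₁₂ : ¬P₁ ≤ P₂)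
    (h₂₁ : ¬P₂ ≤ P₁) (h : ∀ Q : Ideal R, Q.IsPrime → I ≤ Q → P₁ ≤ Q ∨ P₂ ≤ Q) :
    I.minimalPrimes = {P₁, P₂} := by
  ext Q
  constructor
  · intro hQ
    replace hQ : Minimal (fun q => q.IsPrime ∧ I ≤ q) Q := hQ
    rcases h Q hQ.1.1 hQ.1.2 with hle | hle
    · exact .inl (hQ.eq_of_le ⟨h₁, hI₁⟩ hle).symm
    · exact .inr (hQ.eq_of_le ⟨h₂, hI₂⟩ hle).symm
  · rintro (rfl | rfl)
    · refine ⟨⟨h₁, hI₁⟩, fun Q' hQ' hle => ?_⟩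
      exact (h Q' hQ'.1 hQ'.2).resolve_right fun h' => h₂₁ (h'.trans hle)
    · refine ⟨⟨h₂, hI₂⟩, fun Q' hQ' hle => ?_⟩
      exact (h Q' hQ'.1 hQ'.2).resolve_left fun h' => h₁₂ (h'.trans hle)

def maxWeight {n : ℕ} (r : Fin n → ℕ) : ℕ := ∑ i, (r i - 1)

theorem maxWeight_succ {n : ℕ} (r : Fin (n + 1) → ℕ) :
    maxWeight r = (r 0 - 1) + maxWeight fun i => r i.succ := by
  simp [maxWeight, Fin.sum_univ_succ]

theorem le_maxWeight {n : ℕ} {r : Fin n → ℕ} (hr : ∀ i, 2 ≤ r i) : n ≤ maxWeight r := by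
  simpa [maxWeight] using Finset.card_nsmul_le_sum Finset.univ (fun i => r i - 1) 1
    fun i _ => by have := hr i; omega

namespace Idx

variable {n : ℕ} {r : Fin n → ℕ}

def weight (a : Idx n r) : ℕ := ∑ i, (a i : ℕ)

theorem weight_le_maxWeight (a : Idx n r) : weight a ≤ maxWeight r :=
  Finset.sum_le_sum fun i _ => Nat.le_sub_one_of_lt (a i).isLt

theorem weight_eq_zero_iff {a : Idx n r} : weight a = 0 ↔ ∀ i, (a i : ℕ) = 0 := by
  simp [weight, Finset.sum_eq_zero_iff]

theorem weight_eq_maxWeight_iff {a : Idx n r} :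
    weight a = maxWeight r ↔ ∀ i, (a i : ℕ) = r i - 1 := by
  rw [weight, maxWeight, Finset.sum_eq_sum_iff_of_le fun i _ => Nat.le_sub_one_of_lt (a i).isLt]
  simp

theorem weight_update (a : Idx n r) (i : Fin n) (x : Fin (r i)) :
    weight (Function.update a i x) + a i = weight a + x := by
  simp only [weight, ← Finset.add_sum_erase _ _ (Finset.mem_univ i), Function.update_self]
  rw [Finset.sum_congr rfl fun j hj => by rw [Function.update_of_ne (Finset.ne_of_mem_erase hj)]]
  omega

theorem weight_sw (i : Fin n) (a b : Idx n r) : weight (sw i a b) + a i = weight a + b i := by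
  have : sw i a b = Function.update a i (b i) := by
    funext j
    by_cases hj : j = i
    · subst hj; simp [sw]
    · simp [sw, hj]
  rw [this, weight_update]

theorem weight_sw_add_weight_sw (i : Fin n) (a b : Idx n r) :
    weight (sw i a b) + weight (sw i b a) = weight a + weight b := by
  have := weight_sw i a b
  have := weight_sw i b a
  omega

theorem hammingDist_update_of_ne (a : Idx n r) (i : Fin n) {x : Fin (r i)} (hx : x ≠ a i) :
    hammingDist a (Function.update a i x) = 1 := by
  rw [hammingDist, Finset.card_eq_one]
  refine ⟨i, Finset.ext fun j => ?_⟩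
  by_cases hj : j = i
  · subst hj; simp [hx.symm]
  · simp [hj]

theorem hammingDist_sw_sw (i : Fin n) (a b : Idx n r) :
    hammingDist (sw i a b) (sw i b a) = hammingDist a b := by
  unfold hammingDist
  congr 1
  ext j
  by_cases hj : j = i <;> simp [sw, hj, ne_comm]

theorem exists_weight_succ {a : Idx n r} (ha : weight a < maxWeight r) :
    ∃ b : Idx n r, weight b = weight a + 1 ∧ hammingDist a b = 1 := by
  obtain ⟨i, -, hi⟩ := Finset.exists_lt_of_sum_lt (s := Finset.univ)
    (f := fun i => (a i : ℕ)) (g := fun i => r i - 1) ha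
  have hlt : (a i : ℕ) + 1 < r i := by omega
  refine ⟨Function.update a i ⟨_, hlt⟩, ?_, hammingDist_update_of_ne a i ?_⟩
  · have := weight_update a i ⟨_, hlt⟩
    simp only at this
    omega
  · simp [Fin.ext_iff]

theorem exists_weight_eq (hr : ∀ i, 0 < r i) {u : ℕ} (hu : u ≤ maxWeight r) :
    ∃ a : Idx n r, weight a = u := by
  induction u with
  | zero => exact ⟨fun i => ⟨0, hr i⟩, by simp [weight]⟩
  | succ u ih =>
    obtain ⟨a, rfl⟩ := ih (by omega)
    obtain ⟨b, hb, -⟩ := exists_weight_succ (a := a) (by omega)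
    exact ⟨b, hb⟩

theorem hammingDist_eq_zero_or_eq_of_extreme (hr : ∀ i, 2 ≤ r i) {a b : Idx n r}
    (ha : weight a = 0 ∨ weight a = maxWeight r) (hb : weight b = 0 ∨ weight b = maxWeight r) :
    hammingDist a b = 0 ∨ hammingDist a b = n := by
  have hne : (∀ i, (a i : ℕ) ≠ b i) → hammingDist a b = n := fun h => by
    simp [hammingDist, Finset.filter_true_of_mem fun i _ => Fin.val_ne_iff.1 (h i)]
  simp only [weight_eq_zero_iff, weight_eq_maxWeight_iff] at ha hb
  rcases ha with ha | ha <;> rcases hb with hb | hb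
  · exact .inl (hammingDist_eq_zero.2 (funext fun i => Fin.ext ((ha i).trans (hb i).symm)))
  · exact .inr (hne fun i => by have := hr i; have := ha i; have := hb i; omega)
  · exact .inr (hne fun i => by have := hr i; have := ha i; have := hb i; omega)
  · exact .inl (hammingDist_eq_zero.2 (funext fun i => Fin.ext ((ha i).trans (hb i).symm)))

section Cons

variable {r : Fin (n + 1) → ℕ}

theorem weight_cons (x : Fin (r 0)) (a : Idx n fun i => r i.succ) :
    weight (Fin.cons x a : Idx (n + 1) r) = x + weight a := by
  simp [weight, Fin.sum_univ_succ]

theorem hammingDist_cons (x y : Fin (r 0)) (a b : Idx n fun i => r i.succ) :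
    hammingDist (Fin.cons x a : Idx (n + 1) r) (Fin.cons y b) =
      (if x = y then 0 else 1) + hammingDist a b := by
  simp [hammingDist, Finset.card_filter, Fin.sum_univ_succ]

theorem sw_zero_cons (x y : Fin (r 0)) (a b : Idx n fun i => r i.succ) :
    sw 0 (Fin.cons x a : Idx (n + 1) r) (Fin.cons y b) = Fin.cons y a := by
  funext j
  refine Fin.cases ?_ (fun j => ?_) j <;> simp [sw]

end Cons

theorem exists_narrowing_pair (hn : 2 ≤ n) (hr : ∀ i, 2 ≤ r i) {p q : ℕ} (hpq : p + 2 ≤ q)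
    (hq : q ≤ maxWeight r) :
    ∃ (a b : Idx n r) (d : ℕ), weight a = p ∧ weight b = q ∧ 0 < d ∧ d < q - p ∧
      weight (sw ⟨0, by omega⟩ a b) = p + d ∧ weight (sw ⟨0, by omega⟩ b a) = q - d := by
  obtain ⟨n, rfl⟩ : ∃ n', n = n' + 1 := ⟨n - 1, by omega⟩
  have hr0 := hr 0
  have htail : n ≤ maxWeight fun i => r i.succ := le_maxWeight fun i => hr i.succ
  rw [maxWeight_succ] at hq
  set M := maxWeight fun i => r i.succ
  -- First coordinates `α < β` of `a` and `b`; switching them moves weight `β - α`.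
  set α := min p (r 0 - 2)
  set β := max (α + 1) (q - M)
  obtain ⟨a, ha⟩ := exists_weight_eq (r := fun i => r i.succ)
    (fun i => by have := hr i.succ; omega) (u := p - α) (by omega)
  obtain ⟨b, hb⟩ := exists_weight_eq (r := fun i => r i.succ)
    (fun i => by have := hr i.succ; omega) (u := q - β) (by omega)
  refine ⟨Fin.cons ⟨α, by omega⟩ a, Fin.cons ⟨β, by omega⟩ b, β - α, ?_, ?_, by omega,
    by omega, ?_, ?_⟩ <;>
  simp only [Fin.zero_eta, sw_zero_cons, weight_cons, ha, hb] <;> omega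

theorem exists_three_term_pair (hn : 2 ≤ n) (hr : ∀ i, 2 ≤ r i) {u : ℕ}
    (hu : u + 2 ≤ maxWeight r) :
    ∃ a b : Idx n r, hammingDist a b = 2 ∧ weight a = u ∧ weight b = u + 2 ∧
      weight (sw ⟨0, by omega⟩ a b) = u + 1 ∧ weight (sw ⟨0, by omega⟩ b a) = u + 1 := by
  obtain ⟨n, rfl⟩ : ∃ n', n = n' + 1 := ⟨n - 1, by omega⟩
  have hr0 := hr 0
  have htail : n ≤ maxWeight fun i => r i.succ := le_maxWeight fun i => hr i.succ
  rw [maxWeight_succ] at hu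
  set α := min u (r 0 - 2)
  obtain ⟨a, ha⟩ := exists_weight_eq (r := fun i => r i.succ)
    (fun i => by have := hr i.succ; omega) (u := u - α) (by omega)
  obtain ⟨b, hb, hab⟩ := exists_weight_succ (a := a) (by omega)
  refine ⟨Fin.cons ⟨α, by omega⟩ a, Fin.cons ⟨α + 1, by omega⟩ b, ?_, ?_, ?_, ?_, ?_⟩
  · rw [hammingDist_cons, hab, if_neg (by simp [Fin.ext_iff])]
  all_goals simp only [Fin.zero_eta, sw_zero_cons, weight_cons, ha, hb]; omega

end Idx

open Idx

section Variables

variable {n : ℕ} {r : Fin n → ℕ}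

theorem sEquiv_self_iff {a b : Idx n r} : sEquiv n n r a b ↔ weight a = weight b := by
  simp [sEquiv, weight, fun i : Fin n => (Fin.is_lt i).not_ge]

def classWeight : IQ n n r → ℕ :=
  Quotient.lift weight fun _ _ h => sEquiv_self_iff.1 h

@[simp]
theorem classWeight_mk (a : Idx n r) : classWeight (Quotient.mk (sSetoid n n r) a) = weight a :=
  rfl

theorem classWeight_injective : Function.Injective (classWeight (n := n) (r := r)) := by
  rintro ⟨a⟩ ⟨b⟩ h
  exact Quotient.sound (sEquiv_self_iff.2 h)

theorem classWeight_le (v : IQ n n r) : classWeight v ≤ maxWeight r :=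
  Quotient.inductionOn v weight_le_maxWeight

theorem exists_classWeight_eq (hr : ∀ i, 0 < r i) {u : ℕ} (hu : u ≤ maxWeight r) :
    ∃ v : IQ n n r, classWeight v = u :=
  let ⟨a, ha⟩ := exists_weight_eq hr hu
  ⟨Quotient.mk _ a, ha⟩

variable (k : Type) [CommRing k]

/-- The variable `y_u`; it is `0` when no index has weight `u`, i.e. when `u > maxWeight r`. -/
noncomputable def varOfWeight (u : ℕ) : MvPolynomial (IQ n n r) k :=
  open Classical in if h : ∃ v : IQ n n r, classWeight v = u then X h.choose else 0

variable {k}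

theorem varOfWeight_classWeight (v : IQ n n r) : varOfWeight k (classWeight v) = X v := by
  have h : ∃ w : IQ n n r, classWeight w = classWeight v := ⟨v, rfl⟩
  rw [varOfWeight, dif_pos h, classWeight_injective h.choose_spec]

theorem gminor_eq (i : Fin n) (a b : Idx n r) :
    gminor k n i a b = varOfWeight k (weight a) * varOfWeight k (weight b) -
      varOfWeight k (weight (sw i a b)) * varOfWeight k (weight (sw i b a)) := by
  simp only [gminor, xvar, ← varOfWeight_classWeight, classWeight_mk]

end Variables

section Ideals

variable {k : Type} [CommRing k] {n t : ℕ} {r : Fin n → ℕ}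

theorem ITilde_le_ker_of_hankelOn {A F : Type*} [CommRing A]
    [FunLike F (MvPolynomial (IQ n n r) k) A] [RingHomClass F (MvPolynomial (IQ n n r) k) A]
    (π : F) (hπ : HankelOn (maxWeight r) (π ∘ varOfWeight k)) :
    ITilde k n t r ≤ RingHom.ker π := by
  rw [ITilde, Ideal.span_le]
  rintro _ ⟨i, a, b, -, rfl⟩
  rw [SetLike.mem_coe, RingHom.mem_ker, gminor_eq, map_sub, map_mul, map_mul, sub_eq_zero]
  exact hπ _ _ _ _ (weight_le_maxWeight a) (weight_le_maxWeight b) (weight_le_maxWeight _)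
    (weight_le_maxWeight _) (weight_sw_add_weight_sw i a b).symm

theorem hankelOn_of_ITilde_le_ker (hn : 2 ≤ n) (hr : ∀ i, 2 ≤ r i) (ht : 0 < t) {A : Type*}
    [CommRing A] (π : MvPolynomial (IQ n n r) k →+* A) (hle : ITilde k n t r ≤ RingHom.ker π) :
    HankelOn (maxWeight r) (π ∘ varOfWeight k) := by
  refine HankelOn.of_narrowing fun p q hpq hq => ?_
  obtain ⟨a, b, d, rfl, rfl, hd0, hd, hab, hba⟩ := exists_narrowing_pair hn hr hpq hq
  refine ⟨d, hd0, hd, ?_⟩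
  have hmem := hle (Ideal.subset_span ⟨⟨0, by omega⟩, a, b, ht, rfl⟩)
  rw [RingHom.mem_ker, gminor_eq, hab, hba, map_sub, sub_eq_zero] at hmem
  simpa using hmem

theorem monomial_sub_monomial_mem_ITilde (hn : 2 ≤ n) (hr : ∀ i, 2 ≤ r i) (ht : 0 < t)
    {e e' : IQ n n r →₀ ℕ} (hcard : Multiset.card e.toMultiset = Multiset.card e'.toMultiset)
    (hsum : (e.toMultiset.map classWeight).sum = (e'.toMultiset.map classWeight).sum) :
    monomial e 1 - monomial e' 1 ∈ ITilde k n t r := by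
  have hH := hankelOn_of_ITilde_le_ker hn hr ht (Ideal.Quotient.mk (ITilde k n t r))
    (by rw [Ideal.mk_ker])
  have hmk : ∀ e : IQ n n r →₀ ℕ, Ideal.Quotient.mk (ITilde k n t r) (monomial e 1) =
      ((e.toMultiset.map classWeight).map (Ideal.Quotient.mk _ ∘ varOfWeight k)).prod := by
    intro e
    rw [monomial_one_eq_prod_map_X, map_multiset_prod, Multiset.map_map, Multiset.map_map]
    simp only [Function.comp_def, varOfWeight_classWeight]
  rw [← Ideal.Quotient.eq, hmk, hmk]
  refine hH.multiset_prod_map_eq ?_ ?_ (by simpa using hcard) hsum <;>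
  · simp only [Multiset.mem_map]
    rintro _ ⟨v, -, rfl⟩
    exact classWeight_le v

variable (k n r) in
noncomputable def rationalNormalCurve : MvPolynomial (IQ n n r) k →ₐ[k] MvPolynomial (Fin 2) k :=
  aeval fun v => X 0 * X 1 ^ classWeight v

theorem rationalNormalCurve_varOfWeight (hr : ∀ i, 0 < r i) {u : ℕ} (hu : u ≤ maxWeight r) :
    rationalNormalCurve k n r (varOfWeight k u) = X 0 * X 1 ^ u := by
  obtain ⟨v, rfl⟩ := exists_classWeight_eq hr hu
  rw [varOfWeight_classWeight, rationalNormalCurve, aeval_X]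

theorem rationalNormalCurve_monomial (e : IQ n n r →₀ ℕ) :
    rationalNormalCurve k n r (monomial e 1) =
      monomial (Finsupp.single 0 (Multiset.card e.toMultiset) +
        Finsupp.single 1 (e.toMultiset.map classWeight).sum) 1 := by
  rw [monomial_one_eq_prod_map_X, map_multiset_prod, Multiset.map_map]
  induction e.toMultiset using Multiset.induction_on with
  | empty => simp
  | cons v s ih =>
    rw [Multiset.map_cons, Multiset.prod_cons, ih, Function.comp_apply, rationalNormalCurve,
      aeval_X, X_pow_eq_monomial, X, monomial_mul, monomial_mul, one_mul, one_mul,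
      Multiset.card_cons, Multiset.map_cons, Multiset.sum_cons, Finsupp.single_add,
      Finsupp.single_add]
    congr 2
    abel

theorem ITilde_le_ker_rationalNormalCurve (hr : ∀ i, 0 < r i) :
    ITilde k n t r ≤ RingHom.ker (rationalNormalCurve k n r) :=
  ITilde_le_ker_of_hankelOn _ fun p q p' q' hp hq hp' hq' hs => by
    simp only [Function.comp_apply, rationalNormalCurve_varOfWeight hr, hp, hq, hp', hq',
      mul_mul_mul_comm, ← pow_add, hs]

theorem ker_rationalNormalCurve (hn : 2 ≤ n) (hr : ∀ i, 2 ≤ r i) (ht : 0 < t) :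
    RingHom.ker (rationalNormalCurve k n r) = ITilde k n t r := by
  refine le_antisymm (fun f hf => ?_)
    (ITilde_le_ker_rationalNormalCurve fun i => by have := hr i; omega)
  refine LinearMap.ker_le_of_basis (basisMonomials _ k) (basisMonomials _ k)
    (rationalNormalCurve k n r).toLinearMap
    (fun e => Finsupp.single 0 (Multiset.card e.toMultiset) +
      Finsupp.single 1 (e.toMultiset.map classWeight).sum) (fun e => ?_)
    ((ITilde k n t r).restrictScalars k) (fun e e' he => ?_) hf
  · simp only [coe_basisMonomials, AlgHom.toLinearMap_apply, rationalNormalCurve_monomial]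
  · rw [coe_basisMonomials, Submodule.restrictScalars_mem]
    exact monomial_sub_monomial_mem_ITilde hn hr ht (by simpa using congrArg (· 0) he)
      (by simpa using congrArg (· 1) he)

theorem ITilde_isPrime [IsDomain k] (hn : 2 ≤ n) (hr : ∀ i, 2 ≤ r i) (ht : 0 < t) :
    (ITilde k n t r).IsPrime := by
  rw [← ker_rationalNormalCurve hn hr ht]
  exact RingHom.ker_isPrime _

theorem ISlice_le_ITilde : ISlice k n t r ≤ ITilde k n t r :=
  Ideal.span_mono fun _ ⟨i, a, b, hi, _, hf⟩ => ⟨i, a, b, hi, hf⟩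

variable (k n r) in
noncomputable def interiorVarIdeal : Ideal (MvPolynomial (IQ n n r) k) :=
  Ideal.span (X '' {v | classWeight v ≠ 0 ∧ classWeight v ≠ maxWeight r})

theorem interiorVarIdeal_isPrime [IsDomain k] : (interiorVarIdeal k n r).IsPrime :=
  isPrime_span_X_image _

theorem xvar_mul_xvar_mem_interiorVarIdeal (hn : 3 ≤ n) (hr : ∀ i, 2 ≤ r i) {a b : Idx n r}
    (hab : hammingDist a b = 2) : xvar k n a * xvar k n b ∈ interiorVarIdeal k n r := by
  by_cases ha : weight a ≠ 0 ∧ weight a ≠ maxWeight r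
  · exact Ideal.mul_mem_right _ _ (Ideal.subset_span ⟨_, ha, rfl⟩)
  by_cases hb : weight b ≠ 0 ∧ weight b ≠ maxWeight r
  · exact Ideal.mul_mem_left _ _ (Ideal.subset_span ⟨_, hb, rfl⟩)
  rw [not_and_or, not_not, not_not] at ha hb
  rcases hammingDist_eq_zero_or_eq_of_extreme hr ha hb with h | h <;> omega

theorem ISlice_le_interiorVarIdeal (hn : 3 ≤ n) (hr : ∀ i, 2 ≤ r i) :
    ISlice k n t r ≤ interiorVarIdeal k n r := by
  rw [ISlice, Ideal.span_le]
  rintro _ ⟨i, a, b, -, hab, rfl⟩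
  exact Ideal.sub_mem _ (xvar_mul_xvar_mem_interiorVarIdeal hn hr hab)
    (xvar_mul_xvar_mem_interiorVarIdeal hn hr (by rwa [hammingDist_sw_sw]))

theorem ITilde_le_of_isPrime (hn : 2 ≤ n) (hr : ∀ i, 2 ≤ r i) (ht : 0 < t)
    {Q : Ideal (MvPolynomial (IQ n n r) k)} (hQ : Q.IsPrime) (hIQ : ISlice k n t r ≤ Q)
    (hPQ : ¬interiorVarIdeal k n r ≤ Q) : ITilde k n t r ≤ Q := by
  obtain ⟨_, ⟨v, ⟨hv0, hvm⟩, rfl⟩, hvQ⟩ := Set.not_subset.1 (mt Ideal.span_le.2 hPQ)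
  let π := (algebraMap (_ ⧸ Q) (FractionRing (_ ⧸ Q))).comp (Ideal.Quotient.mk Q)
  have hker : RingHom.ker π = Q := by
    ext f
    rw [RingHom.mem_ker, RingHom.comp_apply, IsFractionRing.to_map_eq_zero_iff,
      Ideal.Quotient.eq_zero_iff_mem]
  set z := π ∘ varOfWeight k
  have h3 : ∀ u, u + 2 ≤ maxWeight r → z (u + 1) ^ 2 = z u * z (u + 2) := by
    intro u hu
    obtain ⟨a, b, hab, ha, hb, hsw, hsw'⟩ := exists_three_term_pair hn hr hu
    have hmem := hker ▸ hIQ (Ideal.subset_span ⟨⟨0, by omega⟩, a, b, ht, hab, rfl⟩)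
    rw [RingHom.mem_ker, gminor_eq, ha, hb, hsw, hsw', map_sub, sub_eq_zero] at hmem
    simp only [z, Function.comp_apply, sq, ← map_mul, hmem]
  have hz : ∀ u ≤ maxWeight r, z u ≠ 0 :=
    ne_zero_of_sq_eq_mul h3 (Nat.pos_of_ne_zero hv0) (lt_of_le_of_ne (classWeight_le v) hvm)
      (by simpa [z, varOfWeight_classWeight, ← RingHom.mem_ker, hker] using hvQ)
  rw [← hker]
  exact ITilde_le_ker_of_hankelOn π (hankelOn_of_sq_eq_mul hz h3)

theorem not_interiorVarIdeal_le_ITilde [Nontrivial k] (hn : 2 ≤ n) (hr : ∀ i, 2 ≤ r i) :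
    ¬interiorVarIdeal k n r ≤ ITilde k n t r := by
  have hm : 2 ≤ maxWeight r := hn.trans (le_maxWeight hr)
  obtain ⟨v, hv⟩ := exists_classWeight_eq (r := r) (fun i => by have := hr i; omega) (u := 1)
    (by omega)
  intro hle
  have h := ITilde_le_ker_rationalNormalCurve (fun i => by have := hr i; omega)
    (hle (Ideal.subset_span ⟨v, ⟨by omega, by omega⟩, rfl⟩))
  rw [RingHom.mem_ker, rationalNormalCurve, aeval_X, hv, pow_one, X, X, monomial_mul,
    one_mul, monomial_eq_zero] at h
  exact one_ne_zero h

theorem not_ITilde_le_interiorVarIdeal [IsDomain k] (hn : 2 ≤ n) (hr : ∀ i, 2 ≤ r i)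
    (ht : 0 < t) : ¬ITilde k n t r ≤ interiorVarIdeal k n r := by
  set m := maxWeight r
  have hm : 2 ≤ m := hn.trans (le_maxWeight hr)
  have hr' : ∀ i, 0 < r i := fun i => by have := hr i; omega
  obtain ⟨v₀, hv₀⟩ := exists_classWeight_eq hr' (u := 0) (by omega)
  obtain ⟨v₁, hv₁⟩ := exists_classWeight_eq hr' (u := 1) (by omega)
  obtain ⟨w₁, hw₁⟩ := exists_classWeight_eq hr' (u := m - 1) (by omega)
  obtain ⟨w₀, hw₀⟩ := exists_classWeight_eq hr' (u := m) le_rfl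
  have hH := hankelOn_of_ITilde_le_ker hn hr ht (Ideal.Quotient.mk (ITilde k n t r))
    (by rw [Ideal.mk_ker])
  have hmem : X v₀ * X w₀ - X v₁ * X w₁ ∈ ITilde k n t r := by
    rw [← Ideal.Quotient.eq, map_mul, map_mul, ← varOfWeight_classWeight,
      ← varOfWeight_classWeight, ← varOfWeight_classWeight v₁, ← varOfWeight_classWeight w₁,
      hv₀, hw₀, hv₁, hw₁]
    exact hH _ _ _ _ (by omega) le_rfl (by omega) (by omega) (by omega)
  intro hle
  have hinner : X v₁ * X w₁ ∈ interiorVarIdeal k n r :=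
    Ideal.mul_mem_right _ _ (Ideal.subset_span ⟨v₁, ⟨by omega, by omega⟩, rfl⟩)
  have houter : X v₀ * X w₀ ∈ interiorVarIdeal k n r := by
    simpa using Ideal.add_mem _ (hle hmem) hinner
  rcases interiorVarIdeal_isPrime.mem_or_mem houter with h | h <;>
    rw [interiorVarIdeal, X_mem_span_X_image_iff] at h
  exacts [h.1 hv₀, h.2 hw₀]

end Ideals

theorem minimalPrimes_s_eq_n_general (k : Type) [Field k] (n t : ℕ) (r : Fin n → ℕ)
    (hn : 3 ≤ n) (hr : ∀ i, 2 ≤ r i) (ht1 : 1 ≤ t)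
    (bot top : Idx n r) (hbot : ∀ i, (bot i : ℕ) = 0) (htop : ∀ i, (top i : ℕ) = r i - 1) :
    (ISlice k n t r).minimalPrimes =
      {ITilde k n t r,
        Ideal.span {f | ∃ v : IQ n n r,
          v ≠ Quotient.mk (sSetoid n n r) bot ∧ v ≠ Quotient.mk (sSetoid n n r) top ∧
          f = MvPolynomial.X v}} := by
  have hbot' : ∀ v : IQ n n r, v = Quotient.mk _ bot ↔ classWeight v = 0 := fun v => by
    rw [← classWeight_injective.eq_iff, classWeight_mk, weight_eq_zero_iff.2 hbot]
  have htop' : ∀ v : IQ n n r, v = Quotient.mk _ top ↔ classWeight v = maxWeight r := fun v => by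
    rw [← classWeight_injective.eq_iff, classWeight_mk, weight_eq_maxWeight_iff.2 htop]
  have hP : Ideal.span {f | ∃ v : IQ n n r, v ≠ Quotient.mk (sSetoid n n r) bot ∧
      v ≠ Quotient.mk (sSetoid n n r) top ∧ f = X v} = interiorVarIdeal k n r := by
    simp only [interiorVarIdeal, ne_eq, hbot', htop', Set.image, Set.mem_ofPred_eq,
      eq_comm (a := X _), and_assoc]
  rw [hP]
  exact Ideal.minimalPrimes_eq_pair (ITilde_isPrime (by omega) hr ht1) interiorVarIdeal_isPrime
    ISlice_le_ITilde (ISlice_le_interiorVarIdeal hn hr)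
    (not_ITilde_le_interiorVarIdeal (by omega) hr ht1)
    (not_interiorVarIdeal_le_ITilde (by omega) hr)
    fun Q hQ hIQ => (em _).symm.imp (ITilde_le_of_isPrime (by omega) hr ht1 hQ hIQ) id

/-- for `n ≥ 3` and `s = n`, the ideal `I(n,t)` has exactly two minimal
primes: `Ĩ(n,t)` and the monomial prime generated by all variables `x_a` with `a` not
`n`-equivalent to `(1,…,1)` or `(r 1,…,r n)`. -/
theorem minimalPrimes_s_eq_n (k : Type) [Field k] (n t : ℕ) (r : Fin n → ℕ)
    (hn : 3 ≤ n) (hr : ∀ i, 2 ≤ r i) (ht1 : 1 ≤ t) (htn : t ≤ n)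
    (bot top : Idx n r) (hbot : ∀ i, (bot i : ℕ) = 0) (htop : ∀ i, (top i : ℕ) = r i - 1) :
    (ISlice k n t r).minimalPrimes =
      {ITilde k n t r,
        Ideal.span {f | ∃ v : IQ n n r,
          v ≠ Quotient.mk (sSetoid n n r) bot ∧ v ≠ Quotient.mk (sSetoid n n r) top ∧
          f = MvPolynomial.X v}} :=
  minimalPrimes_s_eq_n_general k n t r hn hr ht1 bot top hbot htop
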